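/- Let ε ≥ 0 and let p ∈ (0,1) satisfy e^{−ε} ≤ p/(1−p) ≤ e^{ε}. Then ln 2 − h(p) ≤ ε²/2, where h(p) = −p ln p − (1−p) ln(1−p) is the binary entropy in nats. Equivalently, a binary random variable whose two posterior probabilities have ratio within [e^{−ε}, e^{ε}] has entropy at least ln 2 − ε²/2 nats (at least 1 − ε²/(2 ln 2) bits). -/

import Mathlib

/-!
With `t = 2p - 1`, `ln 2 - h(p) = p ln (2p) + (1 - p) ln (2(1 - p)) ≤ t²` by `ln x ≤ x - 1`.
The ratio condition says `|artanh t| = |ln (p / (1 - p))| / 2 ≤ ε / 2`, and `|tanh y| ≤ |y|`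
then gives `|t| ≤ ε / 2`.
-/

open Real

namespace Real

theorem tanh_le_self {x : ℝ} (hx : 0 ≤ x) : tanh x ≤ x := by
  have hmono : MonotoneOn (fun t => t * cosh t - sinh t) (Set.Ici 0) := by
    refine monotoneOn_of_hasDerivWithinAt_nonneg (convex_Ici 0) (by fun_prop)
      (fun t _ => (((hasDerivAt_id t).mul (hasDerivAt_cosh t)).sub
        (hasDerivAt_sinh t)).hasDerivWithinAt) fun t ht => ?_
    rw [interior_Ici, Set.mem_Ioi] at ht
    have hderiv : 0 ≤ t * sinh t := mul_nonneg ht.le (sinh_nonneg_iff.mpr ht.le)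
    simp only [id, one_mul]
    linarith [hderiv]
  have h := hmono Set.self_mem_Ici (Set.mem_Ici.mpr hx) hx
  simp only [zero_mul, sinh_zero, sub_zero] at h
  rw [tanh_eq_sinh_div_cosh, div_le_iff₀ (cosh_pos x)]
  linarith

theorem abs_tanh_le_abs (x : ℝ) : |tanh x| ≤ |x| := by
  wlog hx : 0 ≤ x generalizing x
  · simpa only [tanh_neg, abs_neg] using this (-x) (by linarith)
  have htanh : 0 ≤ tanh x :=
    tanh_eq_sinh_div_cosh x ▸ div_nonneg (sinh_nonneg_iff.mpr hx) (cosh_pos x).le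
  rw [abs_of_nonneg hx, abs_of_nonneg htanh]
  exact tanh_le_self hx

theorem abs_le_abs_artanh {x : ℝ} (hx : x ∈ Set.Ioo (-1) 1) : |x| ≤ |artanh x| := by
  simpa only [tanh_artanh hx] using abs_tanh_le_abs (artanh x)

theorem artanh_two_mul_sub_one {p : ℝ} (hp0 : 0 < p) (hp1 : p < 1) :
    artanh (2 * p - 1) = log (p / (1 - p)) / 2 := by
  rw [artanh_eq_half_log ⟨by linarith, by linarith⟩, show 1 + (2 * p - 1) = 2 * p by ring, show 1 - (2 * p - 1) = 2 * (1 - p) by ring,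
    mul_div_mul_left _ _ two_ne_zero]
  ring

theorem log_two_sub_binEntropy_le_sq {p : ℝ} (hp0 : 0 < p) (hp1 : p < 1) :
    log 2 - binEntropy p ≤ (2 * p - 1) ^ 2 := by
  have hq : 0 < 1 - p := by linarith
  have hA : p * log (2 * p) ≤ p * (2 * p - 1) :=
    mul_le_mul_of_nonneg_left (log_le_sub_one_of_pos (by positivity)) hp0.le
  have hB : (1 - p) * log (2 * (1 - p)) ≤ (1 - p) * (2 * (1 - p) - 1) :=
    mul_le_mul_of_nonneg_left (log_le_sub_one_of_pos (by positivity)) hq.le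
  rw [log_mul two_ne_zero hp0.ne'] at hA
  rw [log_mul two_ne_zero hq.ne'] at hB
  rw [binEntropy, log_inv, log_inv]
  nlinarith

end Real

theorem binary_entropy_lower_bound (ε p : ℝ)
    (hp0 : 0 < p) (hp1 : p < 1)
    (hlo : exp (-ε) ≤ p / (1 - p)) (hhi : p / (1 - p) ≤ exp ε) :
    log 2 - (-(p * log p) - (1 - p) * log (1 - p)) ≤ ε ^ 2 / 2 := by
  have hratio : 0 < p / (1 - p) := div_pos hp0 (by linarith)
  have hlog : |log (p / (1 - p))| ≤ ε :=
    abs_le.mpr ⟨(le_log_iff_exp_le hratio).mpr hlo, (log_le_iff_le_exp hratio).mpr hhi⟩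
  have hbias : |2 * p - 1| ≤ ε / 2 :=
    calc |2 * p - 1| ≤ |artanh (2 * p - 1)| := abs_le_abs_artanh ⟨by linarith, by linarith⟩
      _ = |log (p / (1 - p))| / 2 := by rw [artanh_two_mul_sub_one hp0 hp1, abs_div, abs_two]
      _ ≤ ε / 2 := by linarith
  calc log 2 - (-(p * log p) - (1 - p) * log (1 - p)) = log 2 - binEntropy p := by
        rw [binEntropy, log_inv, log_inv]; ring
    _ ≤ (2 * p - 1) ^ 2 := log_two_sub_binEntropy_le_sq hp0 hp1
    _ ≤ (ε / 2) ^ 2 := sq_le_sq.mpr (hbias.trans (le_abs_self _))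
    _ ≤ ε ^ 2 / 2 := by linarith [sq_nonneg ε]
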